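/- For i = 1,…,k let Tᵢ be a finite product of orthogonal projections onto subspaces of H whose intersection equals a common subspace Y ⊆ H for every i, with sᵢ = sup{‖Tᵢ v‖ : v ∈ Yᗮ, ‖v‖ = 1}. In addition, for j = 1,…,m let Rⱼ be a finite product of orthogonal projections onto subspaces of H each of which contains Y. Let M be the composition, in any order, of all k + m operators T₁,…,T_k, R₁,…,R_m. Let d = dim H, m₁ = dim Y, and m₀ = dim ker T₁. Then tr(M† M) ≤ m₁ + (d − m₁ − m₀) · ∏_{i=1}^{k} sᵢ². -/

import Mathlib

open scoped ComplexOrder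

/-- The orthogonal projection onto a subspace `K` of the finite-dimensional complex
inner product space `H`, viewed as an operator `H →L[ℂ] H`. -/
noncomputable def proj {H : Type*} [NormedAddCommGroup H] [InnerProductSpace ℂ H]
    [FiniteDimensional ℂ H] (K : Submodule ℂ H) : H →L[ℂ] H :=
  K.subtypeL ∘L K.orthogonalProjection

section Aux
variable {H : Type*} [NormedAddCommGroup H] [InnerProductSpace ℂ H] [FiniteDimensional ℂ H]

lemma proj_fix_of_mem {K : Submodule ℂ H} {y : H} (hy : y ∈ K) : proj K y = y := by
  exact Submodule.starProjection_eq_self_iff.mpr hy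

lemma proj_norm_le (K : Submodule ℂ H) (x : H) : ‖proj K x‖ ≤ ‖x‖ := by
  have h := Submodule.orthogonalProjectionOnto_norm_le K
  calc ‖proj K x‖ = ‖(K.orthogonalProjection x : H)‖ := rfl
    _ = ‖K.orthogonalProjection x‖ := rfl
    _ ≤ ‖(K.orthogonalProjection : H →L[ℂ] K)‖ * ‖x‖ := (K.orthogonalProjection).le_opNorm x
    _ ≤ 1 * ‖x‖ := mul_le_mul_of_nonneg_right h (norm_nonneg x)
    _ = ‖x‖ := one_mul _

lemma proj_mem_orth {Y K : Submodule ℂ H} (h : Y ≤ K) {v : H} (hv : v ∈ Yᗮ) :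
    proj K v ∈ Yᗮ := by
  intro u hu
  have h1 : (inner ℂ ((K.orthogonalProjection u : H)) v : ℂ) = inner ℂ u ((K.orthogonalProjection v : H)) :=
    Submodule.inner_starProjection_left_eq_right K u v
  have h2 : (K.orthogonalProjection u : H) = u := Submodule.starProjection_eq_self_iff.mpr (h hu)
  have h3 : (inner ℂ u (proj K v) : ℂ) = inner ℂ u v := by
    show (inner ℂ u ((K.orthogonalProjection v : H)) : ℂ) = inner ℂ u v
    rw [← h1, h2]
  rw [h3]
  exact hv u hu

/-- product of a list of "good" operators is good -/
lemma good_prod {Y : Submodule ℂ H} (l : List (H →L[ℂ] H))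
    (hl : ∀ A ∈ l, (∀ y ∈ Y, A y = y) ∧ (∀ v ∈ Yᗮ, A v ∈ Yᗮ) ∧ (∀ x, ‖A x‖ ≤ ‖x‖)) :
    (∀ y ∈ Y, l.prod y = y) ∧ (∀ v ∈ Yᗮ, l.prod v ∈ Yᗮ) ∧ (∀ x, ‖l.prod x‖ ≤ ‖x‖) := by
  induction l with
  | nil => simp
  | cons A l ih =>
    obtain ⟨hA, hl'⟩ := List.forall_mem_cons.mp hl
    obtain ⟨ih1, ih2, ih3⟩ := ih hl'
    refine ⟨fun y hy => ?_, fun v hv => ?_, fun x => ?_⟩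
    · rw [List.prod_cons, ContinuousLinearMap.mul_apply, ih1 y hy, hA.1 y hy]
    · rw [List.prod_cons, ContinuousLinearMap.mul_apply]
      exact hA.2.1 _ (ih2 v hv)
    · rw [List.prod_cons, ContinuousLinearMap.mul_apply]
      exact le_trans (hA.2.2 _) (ih3 x)

/-- norm bound along a list of (operator, bound) pairs, on Yᗮ -/
lemma pairs_prod_bound {Y : Submodule ℂ H} (P : List ((H →L[ℂ] H) × ℝ))
    (hP : ∀ p ∈ P, (∀ v ∈ Yᗮ, p.1 v ∈ Yᗮ) ∧ 0 ≤ p.2 ∧ ∀ v ∈ Yᗮ, ‖p.1 v‖ ≤ p.2 * ‖v‖) :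
    ∀ v ∈ Yᗮ, (P.map Prod.fst).prod v ∈ Yᗮ ∧
      ‖(P.map Prod.fst).prod v‖ ≤ (P.map Prod.snd).prod * ‖v‖ := by
  induction P with
  | nil => intro v hv; simpa using hv
  | cons p P ih =>
    intro v hv
    obtain ⟨hp, hP'⟩ := List.forall_mem_cons.mp hP
    obtain ⟨hw1, hw2⟩ := ih hP' v hv
    set w := (P.map Prod.fst).prod v
    have key : (List.map Prod.fst (p :: P)).prod v = p.1 w := by
      simp [List.prod_cons, ContinuousLinearMap.mul_apply, w]
    constructor
    · rw [key]; exact hp.1 w hw1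
    · rw [key]
      calc ‖p.1 w‖ ≤ p.2 * ‖w‖ := hp.2.2 w hw1
        _ ≤ p.2 * ((P.map Prod.snd).prod * ‖v‖) := by
            exact mul_le_mul_of_nonneg_left hw2 hp.2.1
        _ = ((p :: P).map Prod.snd).prod * ‖v‖ := by rw [List.map_cons, List.prod_cons]; ring

/-- lift a permutation through `List.map` -/
lemma exists_perm_map {α β : Type*} (f : α → β) :
    ∀ (l₁ : List β) (l₂ : List α), l₁.Perm (l₂.map f) → ∃ l₃ : List α, l₃.Perm l₂ ∧ l₃.map f = l₁ := by
  intro l₁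
  induction l₁ with
  | nil =>
    intro l₂ h
    have : l₂.map f = [] := h.symm.eq_nil
    have : l₂ = [] := List.map_eq_nil_iff.mp this
    exact ⟨[], by simp [this], rfl⟩
  | cons b t ih =>
    intro l₂ h
    have hb : b ∈ l₂.map f := h.mem_iff.mp (List.mem_cons_self (a := b) (l := t))
    obtain ⟨a, ha, hfa⟩ := List.mem_map.mp hb
    obtain ⟨u, w, rfl⟩ := List.append_of_mem ha
    have hmap : (u ++ a :: w).map f = u.map f ++ f a :: w.map f := by simp
    have h2 : (b :: t).Perm (f a :: (u.map f ++ w.map f)) := by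
      rw [hmap] at h
      exact h.trans (List.perm_middle)
    rw [hfa] at h2
    have h3 : t.Perm ((u ++ w).map f) := by
      have := h2.cons_inv
      simpa using this
    obtain ⟨l₃, hl₃, hmap₃⟩ := ih (u ++ w) h3
    refine ⟨a :: l₃, ?_, by simp [hmap₃, hfa]⟩
    exact ((hl₃.cons a).trans List.perm_middle.symm)

end Aux


/-- Let each `Tᵢ` (`i = 1, …, k`) be a finite product of orthogonal
projections onto subspaces whose intersection is a common subspace `Y`, with
`sᵢ = sup {‖Tᵢ v‖ : v ∈ Yᗮ, ‖v‖ = 1}`, and let each `Rⱼ` (`j = 1, …, m`) be a finite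
product of orthogonal projections onto subspaces each containing `Y`.  Let `M` be the
composition, in any order, of all `k + m` operators (i.e. `M` is the product of some
permutation of the list `T₁, …, T_k, R₁, …, R_m`).  With `d = dim H`, `m₁ = dim Y` and
`m₀ = dim ker T₁`, one has `tr(M† M) ≤ m₁ + (d − m₁ − m₀) ∏ᵢ sᵢ²` (in the complex order,
the right-hand side being a real number). -/
theorem statement8 {H : Type*} [NormedAddCommGroup H] [InnerProductSpace ℂ H]
    [FiniteDimensional ℂ H]
    (k m : ℕ) (hk : 0 < k) (Y : Submodule ℂ H)
    (T : Fin k → (H →L[ℂ] H)) (R : Fin m → (H →L[ℂ] H))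
    (hT : ∀ i, ∃ (n : ℕ) (X : Fin n → Submodule ℂ H),
      (⨅ j, X j) = Y ∧ T i = (List.ofFn fun j => proj (X j)).reverse.prod)
    (hR : ∀ j, ∃ (n : ℕ) (W : Fin n → Submodule ℂ H),
      (∀ l, Y ≤ W l) ∧ R j = (List.ofFn fun l => proj (W l)).reverse.prod)
    (s : Fin k → ℝ)
    (hs : ∀ i, s i = sSup {r : ℝ | ∃ v ∈ Yᗮ, ‖v‖ = 1 ∧ r = ‖T i v‖})
    (L : List (H →L[ℂ] H)) (hL : L.Perm (List.ofFn T ++ List.ofFn R))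
    (M : H →L[ℂ] H) (hM : M = L.prod) :
    LinearMap.trace ℂ H ((ContinuousLinearMap.adjoint M ∘L M : H →L[ℂ] H) : H →ₗ[ℂ] H) ≤
      (((Module.finrank ℂ ↥Y : ℝ) +
        ((Module.finrank ℂ H : ℝ) - (Module.finrank ℂ ↥Y : ℝ) -
          (Module.finrank ℂ ↥(LinearMap.ker (T ⟨0, hk⟩ : H →ₗ[ℂ] H)) : ℝ)) *
            ∏ i, s i ^ 2 : ℝ) : ℂ) := by
  classical
  -- each operator in the list is "good"
  have hTgood : ∀ i, (∀ y ∈ Y, T i y = y) ∧ (∀ v ∈ Yᗮ, T i v ∈ Yᗮ) ∧ (∀ x, ‖T i x‖ ≤ ‖x‖) := by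
    intro i
    obtain ⟨n, X, hinf, hrep⟩ := hT i
    rw [hrep]
    apply good_prod
    intro A hA
    rw [List.mem_reverse, List.mem_ofFn] at hA
    obtain ⟨j, rfl⟩ := hA
    have hYX : Y ≤ X j := hinf ▸ iInf_le X j
    exact ⟨fun y hy => proj_fix_of_mem (hYX hy), fun v hv => proj_mem_orth hYX hv,
      proj_norm_le (X j)⟩
  have hRgood : ∀ j, (∀ y ∈ Y, R j y = y) ∧ (∀ v ∈ Yᗮ, R j v ∈ Yᗮ) ∧ (∀ x, ‖R j x‖ ≤ ‖x‖) := by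
    intro j
    obtain ⟨n, W, hle, hrep⟩ := hR j
    rw [hrep]
    apply good_prod
    intro A hA
    rw [List.mem_reverse, List.mem_ofFn] at hA
    obtain ⟨l, rfl⟩ := hA
    exact ⟨fun y hy => proj_fix_of_mem (hle l hy), fun v hv => proj_mem_orth (hle l) hv,
      proj_norm_le (W l)⟩
  have hgoodL : ∀ A ∈ L, (∀ y ∈ Y, A y = y) ∧ (∀ v ∈ Yᗮ, A v ∈ Yᗮ) ∧ (∀ x, ‖A x‖ ≤ ‖x‖) := by
    intro A hA
    have : A ∈ List.ofFn T ++ List.ofFn R := hL.mem_iff.mp hA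
    rcases List.mem_append.mp this with h | h
    · obtain ⟨i, rfl⟩ := List.mem_ofFn.mp h; exact hTgood i
    · obtain ⟨j, rfl⟩ := List.mem_ofFn.mp h; exact hRgood j
  obtain ⟨hMfix, hMpres, hMcontr⟩ :
      (∀ y ∈ Y, M y = y) ∧ (∀ v ∈ Yᗮ, M v ∈ Yᗮ) ∧ (∀ x, ‖M x‖ ≤ ‖x‖) := by
    rw [hM]; exact good_prod L hgoodL
  -- the bound s i
  have hTbound : ∀ i, ∀ v ∈ Yᗮ, ‖T i v‖ ≤ s i * ‖v‖ := by
    intro i v hv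
    rcases eq_or_ne v 0 with rfl | hv0
    · simp
    · set u : H := ((‖v‖⁻¹ : ℝ) : ℂ) • v with hu
      have hun : ‖u‖ = 1 := by
        rw [hu, norm_smul]
        simp [norm_inv, inv_mul_cancel₀ (norm_ne_zero_iff.mpr hv0)]
      have huY : u ∈ Yᗮ := Yᗮ.smul_mem _ hv
      have hmem : ‖T i u‖ ∈ {r : ℝ | ∃ v ∈ Yᗮ, ‖v‖ = 1 ∧ r = ‖T i v‖} := ⟨u, huY, hun, rfl⟩
      have hbdd : BddAbove {r : ℝ | ∃ v ∈ Yᗮ, ‖v‖ = 1 ∧ r = ‖T i v‖} := by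
        refine ⟨1, fun r hr => ?_⟩
        obtain ⟨w, _, hw1, rfl⟩ := hr
        calc ‖T i w‖ ≤ ‖w‖ := (hTgood i).2.2 w
          _ = 1 := hw1
      have hle : ‖T i u‖ ≤ s i := by rw [hs i]; exact le_csSup hbdd hmem
      have hveq : v = ((‖v‖ : ℝ) : ℂ) • u := by
        rw [hu, smul_smul]
        rw [show ((‖v‖ : ℝ) : ℂ) * ((‖v‖⁻¹ : ℝ) : ℂ) = (((‖v‖ * ‖v‖⁻¹ : ℝ)) : ℂ) by push_cast; ring]
        rw [mul_inv_cancel₀ (norm_ne_zero_iff.mpr hv0)]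
        simp
      calc ‖T i v‖ = ‖T i (((‖v‖ : ℝ) : ℂ) • u)‖ := by rw [← hveq]
        _ = ‖v‖ * ‖T i u‖ := by
            rw [map_smul, norm_smul, Complex.norm_real, Real.norm_eq_abs,
              abs_of_nonneg (norm_nonneg v)]
        _ ≤ ‖v‖ * s i := mul_le_mul_of_nonneg_left hle (norm_nonneg v)
        _ = s i * ‖v‖ := mul_comm _ _
  have hsnn : ∀ i, 0 ≤ s i := by
    intro i
    by_cases hne : {r : ℝ | ∃ v ∈ Yᗮ, ‖v‖ = 1 ∧ r = ‖T i v‖}.Nonempty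
    · obtain ⟨r, hr⟩ := hne
      obtain ⟨w, _, hw1, rfl⟩ := hr
      have hbdd : BddAbove {r : ℝ | ∃ v ∈ Yᗮ, ‖v‖ = 1 ∧ r = ‖T i v‖} := by
        refine ⟨1, fun r hr => ?_⟩
        obtain ⟨w, _, hw1, rfl⟩ := hr
        calc ‖T i w‖ ≤ ‖w‖ := (hTgood i).2.2 w
          _ = 1 := hw1
      have := le_csSup hbdd (⟨w, ‹w ∈ Yᗮ›, hw1, rfl⟩ :
        ‖T i w‖ ∈ {r : ℝ | ∃ v ∈ Yᗮ, ‖v‖ = 1 ∧ r = ‖T i v‖})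
      rw [hs i]
      exact le_trans (norm_nonneg _) this
    · rw [hs i, Set.not_nonempty_iff_eq_empty.mp hne, Real.sSup_empty]
  -- product norm bound on Yᗮ
  set c : ℝ := ∏ i, s i with hc
  have hcnn : 0 ≤ c := Finset.prod_nonneg fun i _ => hsnn i
  have hMnorm : ∀ v ∈ Yᗮ, ‖M v‖ ≤ c * ‖v‖ := by
    have hpairs : L.Perm (((List.ofFn fun i => (T i, s i)) ++
        (List.ofFn fun j => (R j, (1:ℝ)))).map Prod.fst) := by
      have heq : ((List.ofFn fun i => (T i, s i)) ++
          (List.ofFn fun j => (R j, (1:ℝ)))).map Prod.fst = List.ofFn T ++ List.ofFn R := by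
        simp only [List.map_append, List.map_ofFn]
        rfl
      rw [heq]; exact hL
    obtain ⟨P, hPperm, hPmap⟩ := exists_perm_map Prod.fst L _ hpairs
    have hPcond : ∀ p ∈ P, (∀ v ∈ Yᗮ, p.1 v ∈ Yᗮ) ∧ 0 ≤ p.2 ∧ ∀ v ∈ Yᗮ, ‖p.1 v‖ ≤ p.2 * ‖v‖ := by
      intro p hp
      have hp' := hPperm.mem_iff.mp hp
      rcases List.mem_append.mp hp' with h | h
      · obtain ⟨i, rfl⟩ := List.mem_ofFn.mp h
        exact ⟨fun v hv => (hTgood i).2.1 v hv, hsnn i, hTbound i⟩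
      · obtain ⟨j, rfl⟩ := List.mem_ofFn.mp h
        exact ⟨fun v hv => (hRgood j).2.1 v hv, zero_le_one, fun v _ => by
          simpa using (hRgood j).2.2 v⟩
    intro v hv
    have hkey := (pairs_prod_bound P hPcond v hv).2
    rw [hPmap, ← hM] at hkey
    have hsnd : (P.map Prod.snd).prod = c := by
      rw [(hPperm.map Prod.snd).prod_eq]
      simp [List.map_ofFn, Function.comp, List.prod_append, List.prod_ofFn, hc]
    rwa [hsnd] at hkey
  -- kernel facts
  set N : Submodule ℂ H := LinearMap.ker (M : H →ₗ[ℂ] H) with hN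
  have hNle : N ≤ Yᗮ := by
    intro x hx
    obtain ⟨y, hy, z, hz, rfl⟩ := Y.exists_add_mem_mem_orthogonal x
    have hx0 : M (y + z) = 0 := hx
    have : y + M z = 0 := by rw [← hMfix y hy, ← map_add]; exact hx0
    have hyO : y ∈ Yᗮ := by
      have : y = -(M z) := by linear_combination (norm := abel) this
      rw [this]; exact Yᗮ.neg_mem (hMpres z hz)
    have hy0 : y = 0 := by
      have := hyO y hy
      rwa [inner_self_eq_zero] at this
    rw [hy0, zero_add]; exact hz
  have hkerT1 : Module.finrank ℂ ↥(LinearMap.ker (T ⟨0, hk⟩ : H →ₗ[ℂ] H)) ≤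
      Module.finrank ℂ ↥N := by
    have hT1L : T ⟨0, hk⟩ ∈ L := hL.mem_iff.mpr
      (List.mem_append_left _ (List.mem_ofFn.mpr ⟨⟨0, hk⟩, rfl⟩))
    obtain ⟨l₁, l₂, hsplit⟩ := List.append_of_mem hT1L
    have hMeq : (M : H →ₗ[ℂ] H) =
        (l₁.prod : H →ₗ[ℂ] H) ∘ₗ ((T ⟨0, hk⟩ : H →ₗ[ℂ] H) ∘ₗ (l₂.prod : H →ₗ[ℂ] H)) := by
      rw [hM, hsplit, List.prod_append, List.prod_cons]
      rfl
    have hrange : Module.finrank ℂ ↥(LinearMap.range (M : H →ₗ[ℂ] H)) ≤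
        Module.finrank ℂ ↥(LinearMap.range (T ⟨0, hk⟩ : H →ₗ[ℂ] H)) := by
      rw [hMeq, LinearMap.range_comp]
      refine le_trans (Submodule.finrank_map_le _ _) ?_
      rw [LinearMap.range_comp]
      exact Submodule.finrank_mono (LinearMap.map_le_range)
    have h1 := LinearMap.finrank_range_add_finrank_ker (M : H →ₗ[ℂ] H)
    have h2 := LinearMap.finrank_range_add_finrank_ker (T ⟨0, hk⟩ : H →ₗ[ℂ] H)
    rw [hN]
    omega
  -- the adapted orthonormal basis and trace estimate
  set Z : Submodule ℂ H := (Y ⊔ N)ᗮ with hZ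
  have hZle : Z ≤ Yᗮ := Submodule.orthogonal_le le_sup_left
  set V : Fin 3 → Submodule ℂ H := ![Y, N, Z] with hV
  have hV0 : V 0 = Y := rfl
  have hV1 : V 1 = N := rfl
  have hV2 : V 2 = Z := rfl
  have horth : ∀ i j : Fin 3, i ≠ j → ∀ (x : V i) (y : V j), (inner ℂ (x : H) (y : H) : ℂ) = 0 := by
    have hYN : ∀ (x y : H), x ∈ Y → y ∈ N → (inner ℂ x y : ℂ) = 0 := fun x y hx hy => hNle hy x hx
    have hYZ : ∀ (x y : H), x ∈ Y → y ∈ Z → (inner ℂ x y : ℂ) = 0 := fun x y hx hy => hZle hy x hx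
    have hNZ : ∀ (x y : H), x ∈ N → y ∈ Z → (inner ℂ x y : ℂ) = 0 := fun x y hx hy =>
      (Submodule.orthogonal_le le_sup_right hy) x hx
    intro i j hij x y
    fin_cases i <;> fin_cases j
    · exact absurd rfl hij
    · exact hYN _ _ x.2 y.2
    · exact hYZ _ _ x.2 y.2
    · exact inner_eq_zero_symm.mp (hYN _ _ y.2 x.2)
    · exact absurd rfl hij
    · exact hNZ _ _ x.2 y.2
    · exact inner_eq_zero_symm.mp (hYZ _ _ y.2 x.2)
    · exact inner_eq_zero_symm.mp (hNZ _ _ y.2 x.2)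
    · exact absurd rfl hij
  have hfam : OrthogonalFamily ℂ (fun i => V i) (fun i => (V i).subtypeₗᵢ) := by
    intro i j hij x y
    exact horth i j hij x y
  have hsup : iSup V = ⊤ := by
    rw [eq_top_iff, ← Submodule.sup_orthogonal_of_hasOrthogonalProjection (K := Y ⊔ N)]
    refine sup_le (sup_le ?_ ?_) ?_
    · exact le_iSup V 0
    · exact le_iSup V 1
    · exact le_iSup V 2
  have hint : DirectSum.IsInternal (fun i => V i) := by
    rw [hfam.isInternal_iff]
    rw [show (iSup fun i => V i) = ⊤ from hsup, Submodule.top_orthogonal_eq_bot]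
  let b := hint.collectedOrthonormalBasis hfam (fun i => stdOrthonormalBasis ℂ (V i))
  have hbmem : ∀ x : Σ i : Fin 3, Fin (Module.finrank ℂ (V i)), b x ∈ V x.1 :=
    fun x => hint.collectedOrthonormalBasis_mem hfam _ x
  have hbnorm : ∀ x, ‖b x‖ = 1 := fun x => b.orthonormal.1 x
  have htr : LinearMap.trace ℂ H ((ContinuousLinearMap.adjoint M ∘L M : H →L[ℂ] H) : H →ₗ[ℂ] H)
      = ∑ x : Σ i : Fin 3, Fin (Module.finrank ℂ (V i)), ((‖M (b x)‖ : ℂ))^2 := by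
    rw [LinearMap.trace_eq_matrix_trace ℂ b.toBasis, Matrix.trace]
    refine Finset.sum_congr rfl fun x _ => ?_
    rw [Matrix.diag_apply, LinearMap.toMatrix_apply, OrthonormalBasis.coe_toBasis,
      OrthonormalBasis.coe_toBasis_repr_apply, OrthonormalBasis.repr_apply_apply]
    show (inner ℂ (b x) ((ContinuousLinearMap.adjoint M) (M (b x))) : ℂ) = _
    rw [ContinuousLinearMap.adjoint_inner_right, inner_self_eq_norm_sq_to_K]
    rfl
  have hcast : (∑ x : Σ i : Fin 3, Fin (Module.finrank ℂ (V i)), ((‖M (b x)‖ : ℂ))^2)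
      = ((∑ x : Σ i : Fin 3, Fin (Module.finrank ℂ (V i)), ‖M (b x)‖^2 : ℝ) : ℂ) := by
    push_cast
    ring
  rw [htr, hcast, Complex.real_le_real]
  -- dimension bookkeeping
  have hd : Module.finrank ℂ ↥Y + Module.finrank ℂ ↥N + Module.finrank ℂ ↥Z
      = Module.finrank ℂ H := by
    have h1 : Module.finrank ℂ ↥(Y ⊔ N) + Module.finrank ℂ ↥Z = Module.finrank ℂ H := by
      simpa [hZ] using Submodule.finrank_add_finrank_orthogonal (K := Y ⊔ N)
    have h2 := Submodule.finrank_sup_add_finrank_inf_eq Y N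
    have h3 : Y ⊓ N = ⊥ := by
      rw [eq_bot_iff]; intro x hx
      have hx2 : x ∈ Yᗮ := hNle hx.2
      have h4 := hx2 x hx.1
      rw [inner_self_eq_zero] at h4
      simp [h4]
    rw [h3] at h2
    simp only [finrank_bot, add_zero] at h2
    omega
  -- the sum over the three blocks
  rw [← Finset.univ_sigma_univ, Finset.sum_sigma, Fin.sum_univ_three]
  have hA0 : ∑ j : Fin (Module.finrank ℂ (V 0)), ‖M (b ⟨0, j⟩)‖^2
      = (Module.finrank ℂ ↥Y : ℝ) := by
    have hterm : ∀ j, ‖M (b ⟨0, j⟩)‖^2 = 1 := by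
      intro j
      have hmem : b ⟨0, j⟩ ∈ Y := hbmem ⟨0, j⟩
      rw [hMfix _ hmem, hbnorm]; norm_num
    rw [Finset.sum_congr rfl (fun j _ => hterm j), Finset.sum_const, Finset.card_univ,
      Fintype.card_fin, nsmul_eq_mul, mul_one, hV0]
  have hA1 : ∑ j : Fin (Module.finrank ℂ (V 1)), ‖M (b ⟨1, j⟩)‖^2 = 0 := by
    refine Finset.sum_eq_zero fun j _ => ?_
    have hmem : b ⟨1, j⟩ ∈ N := hbmem ⟨1, j⟩
    have : M (b ⟨1, j⟩) = 0 := hmem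
    rw [this]; simp
  have hA2 : ∑ j : Fin (Module.finrank ℂ (V 2)), ‖M (b ⟨2, j⟩)‖^2
      ≤ (Module.finrank ℂ ↥Z : ℝ) * c^2 := by
    have hterm : ∀ j, ‖M (b ⟨2, j⟩)‖^2 ≤ c^2 := by
      intro j
      have hmem : b ⟨2, j⟩ ∈ Z := hbmem ⟨2, j⟩
      have hle : ‖M (b ⟨2, j⟩)‖ ≤ c := by
        have := hMnorm _ (hZle hmem)
        rwa [hbnorm, mul_one] at this
      exact pow_le_pow_left₀ (norm_nonneg _) hle 2
    calc ∑ j : Fin (Module.finrank ℂ (V 2)), ‖M (b ⟨2, j⟩)‖^2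
        ≤ ∑ _j : Fin (Module.finrank ℂ (V 2)), c^2 := Finset.sum_le_sum fun j _ => hterm j
      _ = (Module.finrank ℂ ↥Z : ℝ) * c^2 := by
          rw [Finset.sum_const, Finset.card_univ, Fintype.card_fin, nsmul_eq_mul, hV2]
  have hZdim : (Module.finrank ℂ ↥Z : ℝ) ≤ (Module.finrank ℂ H : ℝ) - (Module.finrank ℂ ↥Y : ℝ)
      - (Module.finrank ℂ ↥(LinearMap.ker (T ⟨0, hk⟩ : H →ₗ[ℂ] H)) : ℝ) := by
    have h5 : (Module.finrank ℂ ↥(LinearMap.ker (T ⟨0, hk⟩ : H →ₗ[ℂ] H)) : ℝ)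
        ≤ (Module.finrank ℂ ↥N : ℝ) := by exact_mod_cast hkerT1
    have h6 : (Module.finrank ℂ ↥Y : ℝ) + (Module.finrank ℂ ↥N : ℝ) + (Module.finrank ℂ ↥Z : ℝ)
        = (Module.finrank ℂ H : ℝ) := by exact_mod_cast hd
    linarith
  have hprod : (∏ i, s i ^ 2) = c^2 := by
    rw [hc, ← Finset.prod_pow]
  rw [hprod]
  have hc2 : (0:ℝ) ≤ c^2 := sq_nonneg c
  rw [hA0, hA1]
  have : (Module.finrank ℂ ↥Z : ℝ) * c^2 ≤ ((Module.finrank ℂ H : ℝ)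
      - (Module.finrank ℂ ↥Y : ℝ)
      - (Module.finrank ℂ ↥(LinearMap.ker (T ⟨0, hk⟩ : H →ₗ[ℂ] H)) : ℝ)) * c^2 :=
    mul_le_mul_of_nonneg_right hZdim hc2
  linarith [hA2]
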